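/- Let a be an n×n real symmetric positive definite matrix with inverse a⁻¹ = (a_{ij}), and G_a(x,t) = sqrt(det a)(4πt)^{-n/2} exp(-⟨a x,x⟩/(4t)). Then for all x ∈ ℝ^n and t > 0, ∑_{k,ℓ} a_{kℓ} ∂²_{kℓ} G_a(x,t) = ( ⟨a x, x⟩/(4t²) - n/(2t) ) G_a(x,t). -/

import Mathlib

open MeasureTheory Real Matrix

theorem generalized_gaussian_second_deriv_sum (n : ℕ) (a : Matrix (Fin n) (Fin n) ℝ)
    (ha : a.PosDef) (x : EuclideanSpace ℝ (Fin n)) (t : ℝ) (ht : 0 < t) :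
    ∑ k : Fin n, ∑ l : Fin n,
      a⁻¹ k l *
        fderiv ℝ
          (fun y : EuclideanSpace ℝ (Fin n) =>
            fderiv ℝ
              (fun z : EuclideanSpace ℝ (Fin n) =>
                Real.sqrt a.det * (4 * π * t) ^ (-(n : ℝ) / 2) *
                  Real.exp (-(a.mulVec z ⬝ᵥ (z : Fin n → ℝ)) / (4 * t)))
              y (EuclideanSpace.single l 1))
          x (EuclideanSpace.single k 1)
    = ((a.mulVec x ⬝ᵥ (x : Fin n → ℝ)) / (4 * t ^ 2) - n / (2 * t)) *
        (Real.sqrt a.det * (4 * π * t) ^ (-(n : ℝ) / 2) *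
          Real.exp (-(a.mulVec x ⬝ᵥ (x : Fin n → ℝ)) / (4 * t))) := by
  classical
  have ht' : t ≠ 0 := ht.ne'
  have hdet : IsUnit a.det := isUnit_iff_ne_zero.2 ha.det_pos.ne'
  set C : ℝ := Real.sqrt a.det * (4 * π * t) ^ (-(n : ℝ) / 2) with hCdef
  set c : ℝ := -(4 * t)⁻¹ with hcdef
  -- entries of a are symmetric
  have hentry : ∀ i j, a i j = a j i := by
    intro i j
    have h := congrFun (congrFun ha.isHermitian j) i
    simpa [Matrix.conjTranspose_apply] using h
  -- the matrix as a continuous linear map on Euclidean space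
  set A : EuclideanSpace ℝ (Fin n) →L[ℝ] EuclideanSpace ℝ (Fin n) :=
    LinearMap.toContinuousLinearMap (Matrix.toEuclideanLin a) with hAdef
  have hAapp : ∀ (v : EuclideanSpace ℝ (Fin n)) (i : Fin n), A v i = a.mulVec v i :=
    fun v i => rfl
  have hBq : ∀ v w : EuclideanSpace ℝ (Fin n),
      (inner ℝ (A v) w : ℝ) = a.mulVec v ⬝ᵥ (w : Fin n → ℝ) := by
    intro v w
    simp [PiLp.inner_apply, hAapp, dotProduct, mul_comm]
  have hAe : ∀ (l : Fin n) i, a.mulVec (EuclideanSpace.single l 1) i = a i l := by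
    intro l i
    simp [Matrix.mulVec, dotProduct, EuclideanSpace.single_apply]
  have hms : ∀ (v : EuclideanSpace ℝ (Fin n)) (l : Fin n),
      a.mulVec (EuclideanSpace.single l 1) ⬝ᵥ (v : Fin n → ℝ) = a.mulVec v l := by
    intro v l
    calc a.mulVec (EuclideanSpace.single l 1) ⬝ᵥ (v : Fin n → ℝ)
        = ∑ i, a i l * v i :=
          Finset.sum_congr rfl fun i _ => by rw [hAe]
      _ = ∑ i, a l i * v i := Finset.sum_congr rfl fun i _ => by rw [hentry]
      _ = a.mulVec v l := rfl
  have hsingle : ∀ (u : Fin n → ℝ) (l : Fin n),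
      u ⬝ᵥ ((EuclideanSpace.single l 1 : EuclideanSpace ℝ (Fin n)) : Fin n → ℝ) = u l := by
    intro u l
    simp [dotProduct, EuclideanSpace.single_apply]
  -- derivative of the quadratic form
  have hq : ∀ y : EuclideanSpace ℝ (Fin n),
      HasFDerivAt (fun z : EuclideanSpace ℝ (Fin n) => (inner ℝ (A z) z : ℝ))
        ((innerSL ℝ y).comp A + innerSL ℝ (A y)) y := by
    intro y
    have hbb := isBoundedBilinearMap_inner (𝕜 := ℝ) (E := EuclideanSpace ℝ (Fin n))
    have h1 : HasFDerivAt (fun p : EuclideanSpace ℝ (Fin n) × EuclideanSpace ℝ (Fin n) =>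
        (inner ℝ p.1 p.2 : ℝ)) (hbb.deriv (A y, y)) (A y, y) := hbb.hasFDerivAt (A y, y)
    have h2 : HasFDerivAt (fun z : EuclideanSpace ℝ (Fin n) => (A z, z))
        (A.prod (ContinuousLinearMap.id ℝ _)) y :=
      (A.prod (ContinuousLinearMap.id ℝ _)).hasFDerivAt
    have h3 := HasFDerivAt.comp
      (f := fun z : EuclideanSpace ℝ (Fin n) => (A z, z)) y h1 h2
    refine h3.congr_fderiv ?_
    ext v
    simp [IsBoundedBilinearMap.deriv_apply, real_inner_comm]
    rw [add_comm]
  -- the Gaussian function in canonical form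
  have hfun1 : (fun z : EuclideanSpace ℝ (Fin n) =>
      Real.sqrt a.det * (4 * π * t) ^ (-(n : ℝ) / 2) *
        Real.exp (-(a.mulVec z ⬝ᵥ (z : Fin n → ℝ)) / (4 * t)))
      = fun z : EuclideanSpace ℝ (Fin n) => C * Real.exp (c * (inner ℝ (A z) z : ℝ)) := by
    funext z
    rw [hBq]
    congr 1
    rw [hcdef]
    ring
  -- derivative of the Gaussian
  have hF : ∀ y : EuclideanSpace ℝ (Fin n),
      HasFDerivAt (fun z : EuclideanSpace ℝ (Fin n) => C * Real.exp (c * (inner ℝ (A z) z : ℝ)))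
        (C • (Real.exp (c * (inner ℝ (A y) y : ℝ)) •
          (c • ((innerSL ℝ y).comp A + innerSL ℝ (A y))))) y := by
    intro y
    exact (((hq y).const_mul c).exp).const_mul C
  -- the linear map S l
  set S : Fin n → (EuclideanSpace ℝ (Fin n) →L[ℝ] ℝ) := fun l =>
    (innerSL ℝ (EuclideanSpace.single l 1)).comp A +
      innerSL ℝ (A (EuclideanSpace.single l 1)) with hSdef
  have hSval : ∀ (l : Fin n) (v : EuclideanSpace ℝ (Fin n)), S l v = 2 * a.mulVec v l := by
    intro l v
    simp only [hSdef, ContinuousLinearMap.add_apply, ContinuousLinearMap.comp_apply,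
      innerSL_apply_apply]
    rw [real_inner_comm (A v) (EuclideanSpace.single l 1), hBq, hBq, hms, hsingle]
    ring
  -- value of the inner fderiv
  have hval : ∀ (l : Fin n) (y : EuclideanSpace ℝ (Fin n)),
      fderiv ℝ (fun z : EuclideanSpace ℝ (Fin n) =>
          Real.sqrt a.det * (4 * π * t) ^ (-(n : ℝ) / 2) *
            Real.exp (-(a.mulVec z ⬝ᵥ (z : Fin n → ℝ)) / (4 * t)))
        y (EuclideanSpace.single l 1)
      = (C * c) * (Real.exp (c * (inner ℝ (A y) y : ℝ)) * S l y) := by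
    intro l y
    rw [hfun1, (hF y).fderiv]
    simp only [ContinuousLinearMap.smul_apply, smul_eq_mul, hSdef,
      ContinuousLinearMap.add_apply, ContinuousLinearMap.comp_apply, innerSL_apply_apply]
    rw [real_inner_comm (EuclideanSpace.single l 1) (A y),
      real_inner_comm y (A (EuclideanSpace.single l 1))]
    ring
  -- second derivative
  have houter : ∀ (l : Fin n),
      HasFDerivAt (fun y : EuclideanSpace ℝ (Fin n) =>
          (C * c) * (Real.exp (c * (inner ℝ (A y) y : ℝ)) * S l y))
        ((C * c) • (Real.exp (c * (inner ℝ (A x) x : ℝ)) • S l +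
          S l x • (Real.exp (c * (inner ℝ (A x) x : ℝ)) •
            (c • ((innerSL ℝ x).comp A + innerSL ℝ (A x)))))) x := by
    intro l
    exact ((((hq x).const_mul c).exp).mul ((S l).hasFDerivAt)).const_mul (C * c)
  have hval2 : ∀ (k l : Fin n),
      fderiv ℝ (fun y : EuclideanSpace ℝ (Fin n) =>
          fderiv ℝ (fun z : EuclideanSpace ℝ (Fin n) =>
              Real.sqrt a.det * (4 * π * t) ^ (-(n : ℝ) / 2) *
                Real.exp (-(a.mulVec z ⬝ᵥ (z : Fin n → ℝ)) / (4 * t)))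
            y (EuclideanSpace.single l 1))
        x (EuclideanSpace.single k 1)
      = (C * c) * (Real.exp (c * (a.mulVec x ⬝ᵥ (x : Fin n → ℝ))) * (2 * a l k) +
          (2 * a.mulVec x l) * (Real.exp (c * (a.mulVec x ⬝ᵥ (x : Fin n → ℝ))) *
            (c * (2 * a.mulVec x k)))) := by
    intro k l
    have heq : (fun y : EuclideanSpace ℝ (Fin n) =>
        fderiv ℝ (fun z : EuclideanSpace ℝ (Fin n) =>
            Real.sqrt a.det * (4 * π * t) ^ (-(n : ℝ) / 2) *
              Real.exp (-(a.mulVec z ⬝ᵥ (z : Fin n → ℝ)) / (4 * t)))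
          y (EuclideanSpace.single l 1))
        = fun y => (C * c) * (Real.exp (c * (inner ℝ (A y) y : ℝ)) * S l y) :=
      funext fun y => hval l y
    rw [heq, (houter l).fderiv]
    simp only [ContinuousLinearMap.smul_apply, smul_eq_mul, ContinuousLinearMap.add_apply,
      ContinuousLinearMap.comp_apply, innerSL_apply_apply]
    rw [hBq x x]
    rw [hSval l (EuclideanSpace.single k 1), hSval l x, hAe]
    rw [real_inner_comm (A (EuclideanSpace.single k 1)) x, hBq, hBq, hms, hsingle]
    ring
  -- now the sum
  have hT : ∑ k : Fin n, ∑ l : Fin n, a⁻¹ k l * a l k = (n : ℝ) := by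
    have h1 : a⁻¹ * a = 1 := Matrix.nonsing_inv_mul a hdet
    calc ∑ k : Fin n, ∑ l : Fin n, a⁻¹ k l * a l k
        = ∑ k : Fin n, (a⁻¹ * a) k k := by
          refine Finset.sum_congr rfl fun k _ => ?_
          rw [Matrix.mul_apply]
      _ = ∑ _k : Fin n, (1 : ℝ) := by rw [h1]; simp [Matrix.one_apply]
      _ = n := by simp
  have hx' : a⁻¹.mulVec (a.mulVec x) = (x : Fin n → ℝ) := by
    rw [Matrix.mulVec_mulVec, Matrix.nonsing_inv_mul a hdet, Matrix.one_mulVec]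
  have hQ : ∑ k : Fin n, ∑ l : Fin n, a⁻¹ k l * (a.mulVec x k * a.mulVec x l)
      = a.mulVec x ⬝ᵥ (x : Fin n → ℝ) := by
    calc ∑ k : Fin n, ∑ l : Fin n, a⁻¹ k l * (a.mulVec x k * a.mulVec x l)
        = ∑ k : Fin n, a.mulVec x k * (a⁻¹.mulVec (a.mulVec x)) k := by
          refine Finset.sum_congr rfl fun k _ => ?_
          have h2 : (a⁻¹.mulVec (a.mulVec x)) k = ∑ l, a⁻¹ k l * (a.mulVec x) l := rfl
          rw [h2, Finset.mul_sum]
          exact Finset.sum_congr rfl fun l _ => by ring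
      _ = a.mulVec x ⬝ᵥ a⁻¹.mulVec (a.mulVec x) := rfl
      _ = a.mulVec x ⬝ᵥ (x : Fin n → ℝ) := by rw [hx']
  -- put it together
  have hsum : ∀ (k l : Fin n),
      a⁻¹ k l *
        ((C * c) * (Real.exp (c * (a.mulVec x ⬝ᵥ (x : Fin n → ℝ))) * (2 * a l k) +
          (2 * a.mulVec x l) * (Real.exp (c * (a.mulVec x ⬝ᵥ (x : Fin n → ℝ))) *
            (c * (2 * a.mulVec x k)))))
      = (2 * C * c * Real.exp (c * (a.mulVec x ⬝ᵥ (x : Fin n → ℝ)))) * (a⁻¹ k l * a l k)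
        + (4 * C * c ^ 2 * Real.exp (c * (a.mulVec x ⬝ᵥ (x : Fin n → ℝ)))) *
            (a⁻¹ k l * (a.mulVec x k * a.mulVec x l)) := by
    intro k l
    ring
  calc ∑ k : Fin n, ∑ l : Fin n,
      a⁻¹ k l *
        fderiv ℝ
          (fun y : EuclideanSpace ℝ (Fin n) =>
            fderiv ℝ
              (fun z : EuclideanSpace ℝ (Fin n) =>
                Real.sqrt a.det * (4 * π * t) ^ (-(n : ℝ) / 2) *
                  Real.exp (-(a.mulVec z ⬝ᵥ (z : Fin n → ℝ)) / (4 * t)))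
              y (EuclideanSpace.single l 1))
          x (EuclideanSpace.single k 1)
      = ∑ k : Fin n, ∑ l : Fin n,
          ((2 * C * c * Real.exp (c * (a.mulVec x ⬝ᵥ (x : Fin n → ℝ)))) * (a⁻¹ k l * a l k)
            + (4 * C * c ^ 2 * Real.exp (c * (a.mulVec x ⬝ᵥ (x : Fin n → ℝ)))) *
                (a⁻¹ k l * (a.mulVec x k * a.mulVec x l))) := by
        refine Finset.sum_congr rfl fun k _ => Finset.sum_congr rfl fun l _ => ?_
        rw [hval2 k l, hsum k l]
    _ = (2 * C * c * Real.exp (c * (a.mulVec x ⬝ᵥ (x : Fin n → ℝ)))) *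
          (∑ k : Fin n, ∑ l : Fin n, a⁻¹ k l * a l k)
        + (4 * C * c ^ 2 * Real.exp (c * (a.mulVec x ⬝ᵥ (x : Fin n → ℝ)))) *
          (∑ k : Fin n, ∑ l : Fin n, a⁻¹ k l * (a.mulVec x k * a.mulVec x l)) := by
        simp only [Finset.sum_add_distrib, ← Finset.mul_sum]
    _ = ((a.mulVec x ⬝ᵥ (x : Fin n → ℝ)) / (4 * t ^ 2) - n / (2 * t)) *
        (C * Real.exp (-(a.mulVec x ⬝ᵥ (x : Fin n → ℝ)) / (4 * t))) := by
        rw [hT, hQ]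
        have hc : c * (a.mulVec x ⬝ᵥ (x : Fin n → ℝ))
            = -(a.mulVec x ⬝ᵥ (x : Fin n → ℝ)) / (4 * t) := by
          rw [hcdef]; ring
        rw [hc, hcdef]
        field_simp
        ring
    _ = ((a.mulVec x ⬝ᵥ (x : Fin n → ℝ)) / (4 * t ^ 2) - n / (2 * t)) *
        (Real.sqrt a.det * (4 * π * t) ^ (-(n : ℝ) / 2) *
          Real.exp (-(a.mulVec x ⬝ᵥ (x : Fin n → ℝ)) / (4 * t))) := by rw [hCdef]
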